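/- Let K be a number field, K̄ an algebraic closure of K, and O_K̄ the integral closure of O_K in K̄. Then the automatic Witt vectors over O_K̄ are exactly those arising from finite subextensions: W^a_{O_K}(O_K̄) = ⋃_{L/K finite} W^a_{O_K}(O_L), i.e. ξ ∈ W_{O_K}(O_K̄) is automatic if and only if there exists a finite subextension L/K of K̄/K such that all coefficients ξ_a lie in O_L and ξ, regarded as an element of O_L^{I_K}, is an automatic element of W_{O_K}(O_L). -/

import Mathlib

/-!
An automaton has finitely many outputs, so an automatic `ξ` takes values in `O_L` for the finite
extension `L` generated by them; the content of the theorem is that membership in `W_{O_K}`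
descends from `O_K̄` to `O_L`. Each `U_n(A)` is an `O_K`-subalgebra of `A^{I_K}`: the Frobenius
congruences are preserved under sums because `#k_p = ℓ^f` with `ℓ ∈ p`, and hold for constants
by Fermat's little theorem in `k_p`. For the descent of `p·U_n`, pick `β ∈ p \ p²` and `v ∉ p` with `v·p ⊆ (β)`.
If `x ∈ p·U_n(O_K̄)` has coefficients in `O_L`, then `v·x = β·s` with `s ∈ U_n(O_K̄)`, and `s`
has coefficients in `O_L` since `O_L` is saturated in `O_K̄`; writing `1 = a·v + u` with
`u ∈ p` gives `x = β·(a·s) + u·x ∈ p·U_n(O_L)`.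
-/

open NumberField

noncomputable section

/-- The multiplicative monoid `I_K` of nonzero ideals of the ring of integers of `K`. -/
def IdealMonoid (K : Type) [Field K] [NumberField K] : Submonoid (Ideal (𝓞 K)) where
  carrier := {I | I ≠ ⊥}
  mul_mem' := by
    intro a b ha hb h
    rcases Ideal.mul_eq_bot.mp h with h' | h'
    · exact ha h'
    · exact hb h'
  one_mem' := by
    simp only [Set.mem_setOf_eq, Ideal.one_eq_top]
    exact top_ne_bot

/-- `I_K`, the monoid of nonzero ideals, as a type. -/
abbrev IK (K : Type) [Field K] [NumberField K] := ↥(IdealMonoid K)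

/-- `P_K`, the set of nonzero prime ideals of `𝓞 K`, as a type. -/
def PrimeIdeal (K : Type) [Field K] [NumberField K] :=
  {p : Ideal (𝓞 K) // p.IsPrime ∧ p ≠ ⊥}

/-- A nonzero prime ideal, regarded as an element of `I_K`. -/
def PrimeIdeal.toIK {K : Type} [Field K] [NumberField K] (p : PrimeIdeal K) : IK K :=
  ⟨p.1, p.2.2⟩

/-- `#k_p`: the cardinality of the residue ring `R ⧸ p`. -/
def residueCard {R : Type} [CommRing R] (p : Ideal R) : ℕ :=
  Nat.card (R ⧸ p)

/-- The shift operator `ψ_a` on `A^{I_K}`: `(ψ_a ξ)_b = ξ_{a·b}`. -/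
def shift {K : Type} [Field K] [NumberField K] {A : Type} (a : IK K)
    (ξ : IK K → A) : IK K → A :=
  fun b => ξ (a * b)

/-- For an ideal `p` of `𝓞 K` and a subset `S ⊆ A^{I_K}`, the set `p·S` of all finite
sums of products of elements of `p` with elements of (the module generated by) `S`. -/
def idealMulSet {K : Type} [Field K] [NumberField K] {A : Type} [CommRing A]
    [Algebra (𝓞 K) A] (p : Ideal (𝓞 K)) (S : Set (IK K → A)) : Set (IK K → A) :=
  ↑(p • Submodule.span (𝓞 K) S)

/-- The descending chain `U_n(A)` of subsets of `A^{I_K}`. -/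
def UnSet (K : Type) [Field K] [NumberField K] (A : Type) [CommRing A]
    [Algebra (𝓞 K) A] : ℕ → Set (IK K → A)
  | 0 => Set.univ
  | n + 1 => {ξ | ξ ∈ UnSet K A n ∧ ∀ p : PrimeIdeal K,
      shift p.toIK ξ - ξ ^ residueCard p.1 ∈ idealMulSet p.1 (UnSet K A n)}

/-- The ring of Witt vectors `W_{O_K}(A) = ⋂ₙ U_n(A)`, as a subset of `A^{I_K}`. -/
def WittSet (K : Type) [Field K] [NumberField K] (A : Type) [CommRing A]
    [Algebra (𝓞 K) A] : Set (IK K → A) :=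
  ⋂ n, UnSet K A n

/-- A deterministic finite automaton with output, over input alphabet `Δ` and
output alphabet `O`. -/
structure DFAO (Δ O : Type) : Type 1 where
  State : Type
  [finState : Finite State]
  trans : State → Δ → State
  start : State
  out : State → O

/-- The output of a DFAO on an input word, processing letters from left to right. -/
def DFAO.output {Δ O : Type} (M : DFAO Δ O) (l : List Δ) : O :=
  M.out (l.foldl M.trans M.start)

/-- `ξ ∈ A^{I_K}` is automatic if some DFAO with input alphabet `P_K` and output
alphabet `A` produces `ξ_a` from every word of primes whose product is `a`. -/
def IsAutomatic {K : Type} [Field K] [NumberField K] {A : Type}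
    (ξ : IK K → A) : Prop :=
  ∃ M : DFAO (PrimeIdeal K) A, ∀ (l : List (PrimeIdeal K)) (a : IK K),
    (a : Ideal (𝓞 K)) = (l.map Subtype.val).prod → ξ a = M.output l

/-- `v_p(a)`: the largest `e` such that `p^e` divides `a`. -/
def vIdeal {R : Type} [CommRing R] (p a : Ideal R) : ℕ :=
  sSup {e : ℕ | p ^ e ∣ a}

/-- The ring of integers `O_L = O_K̄ ∩ L` of a subextension `L/K` of `K̄/K`, as a
subalgebra of the integral closure `O_K̄` of `O_K` in `K̄`. -/
def subRingOfIntegers (K : Type) [Field K] [NumberField K]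
    (L : IntermediateField K (AlgebraicClosure K)) :
    Subalgebra (𝓞 K) ↥(integralClosure (𝓞 K) (AlgebraicClosure K)) :=
  (Subalgebra.restrictScalars (𝓞 K) L.toSubalgebra).comap
    (integralClosure (𝓞 K) (AlgebraicClosure K)).val

theorem residueCard_ne_zero {R : Type} [CommRing R] {p : Ideal R} [Finite (R ⧸ p)] :
    residueCard p ≠ 0 :=
  Nat.card_pos.ne'

section ResidueField

variable {R : Type} [CommRing R] {p : Ideal R} [p.IsMaximal] [Finite (R ⧸ p)]

theorem Ideal.pow_residueCard_sub_self_mem (c : R) : c ^ residueCard p - c ∈ p := by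
  let := Ideal.Quotient.field p
  let := Fintype.ofFinite (R ⧸ p)
  rw [← Ideal.Quotient.eq_zero_iff_mem, map_sub, map_pow, residueCard, Nat.card_eq_fintype_card,
    FiniteField.pow_card, sub_self]

theorem Ideal.exists_residueCard_eq_prime_pow :
    ∃ ℓ n : ℕ, ℓ.Prime ∧ residueCard p = ℓ ^ n ∧ (ℓ : R) ∈ p := by
  let := Ideal.Quotient.field p
  let := Fintype.ofFinite (R ⧸ p)
  obtain ⟨n, hℓ, hcard⟩ := FiniteField.card (R ⧸ p) (ringChar (R ⧸ p))
  refine ⟨ringChar (R ⧸ p), n, hℓ, by rw [residueCard, Nat.card_eq_fintype_card, hcard], ?_⟩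
  rw [← Ideal.Quotient.eq_zero_iff_mem, map_natCast]
  exact ringChar.Nat.cast_ringChar

variable {B : Type} [CommRing B] [Algebra R B] (N : Subalgebra R B)

theorem Subalgebra.add_pow_residueCard_sub_mem {x y : B} (hx : x ∈ N) (hy : y ∈ N) :
    (x + y) ^ residueCard p - x ^ residueCard p - y ^ residueCard p ∈
      p • Subalgebra.toSubmodule N := by
  obtain ⟨ℓ, n, hℓ, hq, hℓp⟩ := Ideal.exists_residueCard_eq_prime_pow (p := p)
  obtain ⟨r, hr⟩ := exists_add_pow_prime_pow_eq hℓ (⟨x, hx⟩ : N) ⟨y, hy⟩ n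
  have hr' : (x + y) ^ ℓ ^ n - x ^ ℓ ^ n - y ^ ℓ ^ n = (ℓ : R) • (x * y * (r : B)) := by
    have := congrArg Subtype.val hr
    simp only [Subalgebra.coe_pow, Subalgebra.coe_add, Subalgebra.coe_mul,
      SubringClass.coe_natCast] at this
    rw [this, Algebra.smul_def, map_natCast]
    ring
  rw [hq, hr']
  exact Submodule.smul_mem_smul hℓp (N.mul_mem (N.mul_mem hx hy) r.2)

end ResidueField

theorem Subalgebra.mul_mem_ideal_smul {R B : Type} [CommRing R] [CommRing B] [Algebra R B]
    (N : Subalgebra R B) (p : Ideal R) {x m : B} (hx : x ∈ N)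
    (hm : m ∈ p • Subalgebra.toSubmodule N) : x * m ∈ p • Subalgebra.toSubmodule N := by
  refine Submodule.smul_induction_on hm (fun c hc n hn => ?_) (fun m₁ m₂ h₁ h₂ => ?_)
  · rw [mul_smul_comm]
    exact Submodule.smul_mem_smul hc (N.mul_mem hx hn)
  · rw [mul_add]
    exact Submodule.add_mem _ h₁ h₂

instance PrimeIdeal.isMaximal {K : Type} [Field K] [NumberField K] (p : PrimeIdeal K) :
    p.1.IsMaximal :=
  p.2.1.isMaximal p.2.2

instance PrimeIdeal.finite_quotient {K : Type} [Field K] [NumberField K] (p : PrimeIdeal K) :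
    Finite (𝓞 K ⧸ p.1) :=
  Ring.HasFiniteQuotients.finiteQuotient p.2.2

section WittStep

variable {K : Type} [Field K] [NumberField K] {A : Type} [CommRing A] [Algebra (𝓞 K) A]

/-- The passage from `U_n` to `U_{n+1}`, performed on an arbitrary subalgebra of `A^{I_K}`. -/
def wittStep (N : Subalgebra (𝓞 K) (IK K → A)) : Subalgebra (𝓞 K) (IK K → A) where
  carrier := {ξ | ξ ∈ N ∧ ∀ p : PrimeIdeal K,
    shift p.toIK ξ - ξ ^ residueCard p.1 ∈ p.1 • Subalgebra.toSubmodule N}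
  zero_mem' := ⟨N.zero_mem, fun p => by
    rw [show shift p.toIK (0 : IK K → A) = 0 from rfl, zero_pow residueCard_ne_zero, sub_zero]
    exact zero_mem _⟩
  one_mem' := ⟨N.one_mem, fun p => by
    rw [show shift p.toIK (1 : IK K → A) = 1 from rfl, one_pow, sub_self]
    exact zero_mem _⟩
  add_mem' := by
    rintro ξ ζ ⟨hξ, hξp⟩ ⟨hζ, hζp⟩
    refine ⟨N.add_mem hξ hζ, fun p => ?_⟩
    have hsplit : shift p.toIK (ξ + ζ) - (ξ + ζ) ^ residueCard p.1
        = (shift p.toIK ξ - ξ ^ residueCard p.1) + (shift p.toIK ζ - ζ ^ residueCard p.1)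
          - ((ξ + ζ) ^ residueCard p.1 - ξ ^ residueCard p.1 - ζ ^ residueCard p.1) := by
      change shift p.toIK ξ + shift p.toIK ζ - _ = _
      ring
    rw [hsplit]
    exact Submodule.sub_mem _ (Submodule.add_mem _ (hξp p) (hζp p))
      (N.add_pow_residueCard_sub_mem hξ hζ)
  mul_mem' := by
    rintro ξ ζ ⟨hξ, hξp⟩ ⟨hζ, hζp⟩
    refine ⟨N.mul_mem hξ hζ, fun p => ?_⟩
    have hsplit : shift p.toIK (ξ * ζ) - (ξ * ζ) ^ residueCard p.1
        = shift p.toIK ξ * (shift p.toIK ζ - ζ ^ residueCard p.1)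
          + ζ ^ residueCard p.1 * (shift p.toIK ξ - ξ ^ residueCard p.1) := by
      change shift p.toIK ξ * shift p.toIK ζ - _ = _
      ring
    have hshift : shift p.toIK ξ ∈ N := by
      rw [← sub_add_cancel (shift p.toIK ξ) (ξ ^ residueCard p.1)]
      exact N.add_mem (Submodule.smul_le_right (hξp p)) (N.pow_mem hξ _)
    rw [hsplit]
    exact Submodule.add_mem _ (N.mul_mem_ideal_smul _ hshift (hζp p))
      (N.mul_mem_ideal_smul _ (N.pow_mem hζ _) (hξp p))
  algebraMap_mem' c := by
    refine ⟨N.algebraMap_mem c, fun p => ?_⟩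
    have hsplit : shift p.toIK (algebraMap (𝓞 K) (IK K → A) c)
          - algebraMap (𝓞 K) (IK K → A) c ^ residueCard p.1
        = (c - c ^ residueCard p.1) • (1 : IK K → A) := by
      rw [← map_pow, sub_smul, ← Algebra.algebraMap_eq_smul_one, ← Algebra.algebraMap_eq_smul_one]
      rfl
    rw [hsplit]
    refine Submodule.smul_mem_smul ?_ N.one_mem
    simpa using p.1.neg_mem (Ideal.pow_residueCard_sub_self_mem c)

end WittStep

section UnSubalgebra

variable (K : Type) [Field K] [NumberField K] (A : Type) [CommRing A] [Algebra (𝓞 K) A]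

def unSubalgebra : ℕ → Subalgebra (𝓞 K) (IK K → A)
  | 0 => ⊤
  | n + 1 => wittStep (unSubalgebra n)

theorem idealMulSet_coe_subalgebra (p : Ideal (𝓞 K)) (N : Subalgebra (𝓞 K) (IK K → A)) :
    idealMulSet p (N : Set (IK K → A)) = ↑(p • Subalgebra.toSubmodule N) := by
  unfold idealMulSet
  rw [← Subalgebra.coe_toSubmodule, Submodule.span_eq]

theorem coe_unSubalgebra (n : ℕ) : (unSubalgebra K A n : Set (IK K → A)) = UnSet K A n := by
  induction n with
  | zero => rfl
  | succ n ih =>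
    ext ξ
    change (ξ ∈ unSubalgebra K A n ∧ _) ↔ (ξ ∈ UnSet K A n ∧ _)
    simp only [← ih, idealMulSet_coe_subalgebra]
    rfl

end UnSubalgebra

theorem Ideal.exists_mul_span_le_span_singleton {R : Type} [CommRing R] [IsDedekindDomain R]
    {p : Ideal R} [p.IsPrime] (hp : p ≠ ⊥) :
    ∃ β ∈ p, β ≠ 0 ∧ ∃ v ∉ p, Ideal.span {v} * p ≤ Ideal.span {β} := by
  obtain ⟨β, hβp, hβp2⟩ := SetLike.exists_of_lt (by simpa using Ideal.pow_succ_lt_pow hp 1)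
  have hβ : β ≠ 0 := by
    rintro rfl
    exact hβp2 (zero_mem _)
  obtain ⟨b, hb⟩ : p ∣ Ideal.span {β} :=
    Ideal.dvd_iff_le.mpr ((Ideal.span_singleton_le_iff_mem _).mpr hβp)
  have hbp : ¬ b ≤ p := fun hbp => hβp2 <| by
    rw [pow_two]
    exact Ideal.mul_mono_right hbp (hb ▸ Ideal.mem_span_singleton_self β)
  obtain ⟨v, hvb, hvp⟩ := SetLike.not_le_iff_exists.mp hbp
  refine ⟨β, hβp, hβ, v, hvp, ?_⟩
  rw [hb, mul_comm p b]
  exact Ideal.mul_mono_left ((Ideal.span_singleton_le_iff_mem _).mpr hvb)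

open scoped Pointwise in
theorem Submodule.comap_ideal_smul_le {R M M' : Type} [CommRing R] [IsDedekindDomain R]
    [AddCommGroup M] [Module R M] [AddCommGroup M'] [Module R M'] {f : M' →ₗ[R] M}
    (hf : Function.Injective f)
    (hsat : ∀ (β : R) (m : M), β ≠ 0 → β • m ∈ LinearMap.range f → m ∈ LinearMap.range f)
    {N : Submodule R M} {N' : Submodule R M'} (hN : N.comap f ≤ N')
    {p : Ideal R} [p.IsPrime] (hp : p ≠ ⊥) : (p • N).comap f ≤ p • N' := by
  intro y hy
  have hyN' : y ∈ N' := hN (Submodule.smul_le_right (M := M) hy)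
  obtain ⟨β, hβp, hβ, v, hvp, hvβ⟩ := Ideal.exists_mul_span_le_span_singleton hp
  obtain ⟨a, u, hu, hau⟩ := (Ideal.IsPrime.isMaximal inferInstance hp).exists_inv hvp
  have hvy : v • f y ∈ β • N := by
    rw [← Submodule.ideal_span_singleton_smul]
    refine Submodule.smul_mono_left hvβ ?_
    rw [Submodule.mul_smul]
    exact Submodule.smul_mem_smul (Ideal.mem_span_singleton_self v) hy
  obtain ⟨s, hsN, hs⟩ := (Submodule.mem_smul_pointwise_iff_exists _ _ _).mp hvy
  obtain ⟨s', rfl⟩ := hsat β s hβ (hs ▸ ⟨v • y, f.map_smul v y⟩)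
  have hvy' : v • y = β • s' := hf (by rw [f.map_smul, f.map_smul, hs])
  have hy_eq : y = β • (a • s') + u • y := by
    rw [smul_comm β a, ← hvy', smul_smul, ← add_smul, hau, one_smul]
  rw [hy_eq]
  exact Submodule.add_mem _ (Submodule.smul_mem_smul hβp (N'.smul_mem a (hN hsN)))
    (Submodule.smul_mem_smul hu hyN')

section Descent

variable {K : Type} [Field K] [NumberField K] {A : Type} [CommRing A] [Algebra (𝓞 K) A]
  {S : Subalgebra (𝓞 K) A}

theorem comap_unSubalgebra_le (hS : ∀ (β : 𝓞 K) (x : A), β ≠ 0 → β • x ∈ S → x ∈ S) (n : ℕ) :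
    (unSubalgebra K A n).comap (S.val.compLeft (IK K)) ≤ unSubalgebra K S n := by
  set g := S.val.compLeft (IK K)
  have hg : Function.Injective g := fun ξ ζ h => funext fun a => Subtype.ext (congrFun h a)
  have hsat : ∀ (β : 𝓞 K) (m : IK K → A), β ≠ 0 →
      β • m ∈ LinearMap.range g.toLinearMap → m ∈ LinearMap.range g.toLinearMap := by
    rintro β m hβ ⟨ξ, hξ⟩
    refine ⟨fun a => ⟨m a, hS β (m a) hβ ?_⟩, rfl⟩
    rw [← Pi.smul_apply, ← hξ]
    exact (ξ a).2
  induction n with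
  | zero => exact le_top
  | succ n ih =>
    rintro ξ ⟨hξ, hξp⟩
    refine ⟨ih hξ, fun p => ?_⟩
    have hmap : g (shift p.toIK ξ - ξ ^ residueCard p.1) =
        shift p.toIK (g ξ) - g ξ ^ residueCard p.1 := by
      rw [map_sub, map_pow]
      rfl
    refine Submodule.comap_ideal_smul_le (f := g.toLinearMap)
      (N := Subalgebra.toSubmodule (unSubalgebra K A n)) hg hsat ih p.2.2 ?_
    rw [Submodule.mem_comap, AlgHom.toLinearMap_apply, hmap]
    exact hξp p

theorem mem_wittSet_of_val_comp (hS : ∀ (β : 𝓞 K) (x : A), β ≠ 0 → β • x ∈ S → x ∈ S)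
    {ξ : IK K → S} (hξ : (fun a => (ξ a : A)) ∈ WittSet K A) : ξ ∈ WittSet K S :=
  Set.mem_iInter.mpr fun n => by
    have hξn : ξ ∈ (unSubalgebra K A n).comap (S.val.compLeft (IK K)) := by
      rw [Subalgebra.mem_comap, ← SetLike.mem_coe, coe_unSubalgebra]
      exact Set.mem_iInter.mp hξ n
    rw [← coe_unSubalgebra]
    exact comap_unSubalgebra_le hS n hξn

end Descent

section Automatic

variable {K : Type} [Field K] [NumberField K] {A : Type}

theorem exists_list_primeIdeal_prod_eq (a : IK K) :
    ∃ l : List (PrimeIdeal K), (a : Ideal (𝓞 K)) = (l.map Subtype.val).prod := by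
  suffices h : ∀ I : Ideal (𝓞 K), I ≠ ⊥ → ∃ l : List (PrimeIdeal K),
      I = (l.map Subtype.val).prod from h a a.2
  intro I
  induction I using UniqueFactorizationMonoid.induction_on_prime with
  | h₁ => exact fun h => absurd rfl h
  | h₂ u hu => exact fun _ => ⟨[], (Ideal.isUnit_iff.mp hu).trans Ideal.one_eq_top.symm⟩
  | h₃ I q hI hq ih =>
    obtain ⟨l, hl⟩ := ih hI
    exact fun _ => ⟨⟨q, Ideal.isPrime_of_prime hq, hq.ne_zero⟩ :: l,
      by rw [hl]; rfl⟩

theorem IsAutomatic.finite_range {ξ : IK K → A} (hξ : IsAutomatic ξ) :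
    (Set.range ξ).Finite := by
  obtain ⟨M, hM⟩ := hξ
  have := M.finState
  refine (Set.finite_range M.out).subset ?_
  rintro _ ⟨a, rfl⟩
  obtain ⟨l, hl⟩ := exists_list_primeIdeal_prod_eq a
  exact ⟨_, (hM l a hl).symm⟩

theorem IsAutomatic.comp {B : Type} (f : A → B) {ξ : IK K → A} (hξ : IsAutomatic ξ) :
    IsAutomatic (fun a => f (ξ a)) := by
  obtain ⟨M, hM⟩ := hξ
  exact ⟨{ M with out := f ∘ M.out }, fun l a hl => congrArg f (hM l a hl)⟩

theorem IsAutomatic.codRestrict {s : Set A} {ξ : IK K → A} (hξ : IsAutomatic ξ)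
    (hs : ∀ a, ξ a ∈ s) : IsAutomatic (fun a => (⟨ξ a, hs a⟩ : s)) := by
  classical
  obtain ⟨M, hM⟩ := hξ
  refine ⟨{ M with out := fun q => if h : M.out q ∈ s then ⟨M.out q, h⟩ else ⟨ξ 1, hs 1⟩ },
    fun l a hl => ?_⟩
  have hout : ξ a = M.output l := hM l a hl
  simp only [DFAO.output] at hout ⊢
  rw [dif_pos (hout ▸ hs a)]
  exact Subtype.ext hout

end Automatic

theorem mem_subRingOfIntegers_of_smul_mem {K : Type} [Field K] [NumberField K]
    (L : IntermediateField K (AlgebraicClosure K)) {β : 𝓞 K} (hβ : β ≠ 0)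
    {x : integralClosure (𝓞 K) (AlgebraicClosure K)} (hx : β • x ∈ subRingOfIntegers K L) :
    x ∈ subRingOfIntegers K L := by
  change (x : AlgebraicClosure K) ∈ L
  change ((β • x : integralClosure (𝓞 K) (AlgebraicClosure K)) : AlgebraicClosure K) ∈ L at hx
  have hβL : algebraMap K (AlgebraicClosure K) β ∈ L := L.algebraMap_mem _
  have hβ' : algebraMap K (AlgebraicClosure K) β ≠ 0 := by simpa using hβ
  rw [Subalgebra.coe_smul, algebra_compatible_smul K, Algebra.smul_def] at hx
  simpa [hβ'] using L.div_mem hx hβL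

/-- `W^a_{O_K}(O_K̄) = ⋃_{L/K finite} W^a_{O_K}(O_L)`: a Witt vector
`ξ ∈ W_{O_K}(O_K̄)` is automatic if and only if there is a finite subextension `L/K`
of `K̄/K` such that all coefficients of `ξ` lie in `O_L` and `ξ`, regarded as an element
of `O_L^{I_K}`, is an automatic element of `W_{O_K}(O_L)`. -/
theorem automatic_iff_automatic_at_finite_level (K : Type) [Field K] [NumberField K]
    (ξ : IK K → ↥(integralClosure (𝓞 K) (AlgebraicClosure K)))
    (hξ : ξ ∈ WittSet K ↥(integralClosure (𝓞 K) (AlgebraicClosure K))) :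
    IsAutomatic ξ ↔
      ∃ (L : IntermediateField K (AlgebraicClosure K)) (_ : FiniteDimensional K ↥L)
        (hmem : ∀ a : IK K, ξ a ∈ subRingOfIntegers K L),
        (fun a : IK K => (⟨ξ a, hmem a⟩ : ↥(subRingOfIntegers K L))) ∈
          WittSet K ↥(subRingOfIntegers K L) ∧
        IsAutomatic (fun a : IK K => (⟨ξ a, hmem a⟩ : ↥(subRingOfIntegers K L))) := by
  constructor
  · intro hauto
    let V : Set (AlgebraicClosure K) := Set.range fun a => (ξ a : AlgebraicClosure K)
    have : Finite V := (hauto.comp Subtype.val).finite_range.to_subtype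
    have hmem : ∀ a, ξ a ∈ subRingOfIntegers K (IntermediateField.adjoin K V) :=
      fun a => IntermediateField.subset_adjoin K V ⟨a, rfl⟩
    refine ⟨IntermediateField.adjoin K V,
      IntermediateField.finiteDimensional_adjoin fun x _ => Algebra.IsIntegral.isIntegral x,
      hmem, mem_wittSet_of_val_comp (fun β _ hβ => mem_subRingOfIntegers_of_smul_mem _ hβ) hξ,
      hauto.codRestrict hmem⟩
  · rintro ⟨L, _, _, -, hauto⟩
    exact hauto.comp Subtype.val

end
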